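/- Let A be a 3×3 real orthogonal matrix with det A = 1, let e : ZMod 8 ≃ ZMod 8 be a bijection, and suppose A.mulVec (xpln (e i)) = xpln i for every i ∈ ZMod 8. If x : ZMod 8 → (Fin 3 → ℝ) satisfies the Eckart condition, then the map y defined by y i = A.mulVec (x (e i)) also satisfies the Eckart condition. (Hence the actions of the symmetry group of the octagon on configurations send standard (Eckart-aligned) realizations to standard realizations.) -/

import Mathlib

open Real Matrix

/-- The planar regular octagon reference configuration:
`xpln i = (cos ((2i-1)π/8), sin ((2i-1)π/8), 0)`, using the integer lift `i.val`;
this is well defined on `ZMod 8` since the expression is unchanged under `i ↦ i + 8`. -/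
noncomputable def xpln (i : ZMod 8) : Fin 3 → ℝ :=
  ![Real.cos ((2 * (i.val : ℝ) - 1) * π / 8), Real.sin ((2 * (i.val : ℝ) - 1) * π / 8), 0]

/-- The Eckart condition with respect to the reference octagon `xpln`. -/
def EckartCondition (x : ZMod 8 → Fin 3 → ℝ) : Prop :=
  (∑ i : ZMod 8, x i = 0) ∧ (∑ i : ZMod 8, (xpln i) ⨯₃ (x i) = 0)

/-! A rotation commutes with the cross product because a linear map transforms the cross
product by its cofactor matrix, which for a rotation is the rotation itself. The two sums of
the Eckart condition are then the images under `A` of the original sums, reindexed by `e`. -/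

theorem cross_mulVec_mulVec {R : Type*} [CommRing R] (A : Matrix (Fin 3) (Fin 3) R)
    (u v : Fin 3 → R) : (A *ᵥ u) ⨯₃ (A *ᵥ v) = (adjugate A)ᵀ *ᵥ (u ⨯₃ v) := by
  ext i
  fin_cases i <;>
    simp [cross_apply, adjugate_fin_three, mulVec, dotProduct, Fin.sum_univ_three] <;> ring

theorem adjugate_eq_transpose_of_transpose_mul_self {n R : Type*} [Fintype n] [DecidableEq n]
    [CommRing R] {A : Matrix n n R} (hA : Aᵀ * A = 1) (hdet : A.det = 1) :
    adjugate A = Aᵀ := by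
  calc adjugate A = Aᵀ * (A * adjugate A) := by rw [← Matrix.mul_assoc, hA, Matrix.one_mul]
    _ = Aᵀ := by rw [mul_adjugate, hdet, one_smul, Matrix.mul_one]

theorem cross_mulVec_mulVec_of_rotation {R : Type*} [CommRing R] {A : Matrix (Fin 3) (Fin 3) R}
    (hA : Aᵀ * A = 1) (hdet : A.det = 1) (u v : Fin 3 → R) :
    (A *ᵥ u) ⨯₃ (A *ᵥ v) = A *ᵥ (u ⨯₃ v) := by
  rw [cross_mulVec_mulVec, adjugate_eq_transpose_of_transpose_mul_self hA hdet, transpose_transpose]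

theorem eckartCondition_of_symmetry_action
    (A : Matrix (Fin 3) (Fin 3) ℝ) (hA : Aᵀ * A = 1) (hdet : A.det = 1)
    (e : ZMod 8 ≃ ZMod 8)
    (he : ∀ i : ZMod 8, A.mulVec (xpln (e i)) = xpln i)
    (x : ZMod 8 → Fin 3 → ℝ) (hx : EckartCondition x) :
    EckartCondition (fun i => A.mulVec (x (e i))) := by
  obtain ⟨hsum, hcross⟩ := hx
  have hrot (i : ZMod 8) : xpln i ⨯₃ (A *ᵥ x (e i)) = A *ᵥ (xpln (e i) ⨯₃ x (e i)) := by
    rw [← he i, cross_mulVec_mulVec_of_rotation hA hdet]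
  constructor
  · rw [← mulVec_sum, Equiv.sum_comp e x, hsum, mulVec_zero]
  · simp only [hrot]
    rw [← mulVec_sum, Equiv.sum_comp e (fun j => xpln j ⨯₃ x j), hcross, mulVec_zero]
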